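/- Let X, Y ∈ ℤ^{n×n} be symmetric, ζ, η ∈ ℤⁿ, and let Q be a rational orthogonal n×n matrix with Q X Qᵀ = Y and Q ζ = η, where det(W_{X,ζ}) ≠ 0. Let ℓ be the level of Q, i.e., the least positive integer such that ℓQ has integer entries. Then ℓ divides det(W_{X,ζ}). -/

import Mathlib

open Matrix

/-- The walk matrix `[ζ, Xζ, X²ζ, …, X^{n−1}ζ]`: its `j`-th column is `X^j ζ`. -/
def walkMatrix {n : ℕ} {R : Type*} [CommRing R]
    (X : Matrix (Fin n) (Fin n) R) (ζ : Fin n → R) : Matrix (Fin n) (Fin n) R :=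
  Matrix.of fun i j => ((X ^ (j : ℕ)) *ᵥ ζ) i

/-- `ℓ` is the level of the rational matrix `Q`: the least positive integer such that
`ℓ • Q` has integer entries. -/
def IsLevel {n : ℕ} (Q : Matrix (Fin n) (Fin n) ℚ) (ℓ : ℕ) : Prop :=
  (0 < ℓ ∧ ∀ i j, ∃ z : ℤ, (ℓ : ℚ) * Q i j = (z : ℚ)) ∧
    ∀ m : ℕ, 0 < m → (∀ i j, ∃ z : ℤ, (m : ℚ) * Q i j = (z : ℚ)) → ℓ ≤ m

/-! Since `QᵀQ = 1`, the relation `Q X Qᵀ = Y` becomes `Q X = Y Q`, hence `Q Xʲ ζ = Yʲ η` and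
`Q W_{X,ζ} = W_{Y,η}`. Multiplying by the adjugate, `det(W_{X,ζ}) Q = W_{Y,η} adj(W_{X,ζ})` is an
integer matrix. The integers clearing the denominators of `Q` form an ideal of `ℤ`; its least
positive element, the level, generates it and so divides `det(W_{X,ζ})`. -/

theorem Matrix.mul_eq_mul_of_mul_mul_transpose_eq {n R : Type*} [Fintype n] [DecidableEq n]
    [CommRing R] {Q A B : Matrix n n R} (hQ : Qᵀ * Q = 1) (hQA : Q * A * Qᵀ = B) :
    Q * A = B * Q := by
  rw [← hQA, Matrix.mul_assoc _ Qᵀ, hQ, Matrix.mul_one]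

theorem walkMatrix_map {n : ℕ} {R S : Type*} [CommRing R] [CommRing S] (f : R →+* S)
    (X : Matrix (Fin n) (Fin n) R) (ζ : Fin n → R) :
    (walkMatrix X ζ).map f = walkMatrix (X.map f) (f ∘ ζ) := by
  ext i j
  simp only [walkMatrix, Matrix.map_apply, Matrix.of_apply, ← RingHom.mapMatrix_apply,
    ← map_pow, RingHom.map_mulVec]

theorem mul_walkMatrix_of_semiconj {n : ℕ} {R : Type*} [CommRing R]
    {Q X Y : Matrix (Fin n) (Fin n) R} {ζ η : Fin n → R} (hQX : SemiconjBy Q X Y)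
    (hQζ : Q *ᵥ ζ = η) : Q * walkMatrix X ζ = walkMatrix Y η := by
  ext i j
  have hcol : Q *ᵥ (X ^ (j : ℕ) *ᵥ ζ) = Y ^ (j : ℕ) *ᵥ η := by
    rw [Matrix.mulVec_mulVec, (hQX.pow_right j).eq, ← Matrix.mulVec_mulVec, hQζ]
  simpa [walkMatrix, Matrix.mul_apply, Matrix.mulVec, dotProduct] using congrFun hcol i

theorem Matrix.det_smul_eq_mul_adjugate_of_mul_eq {n R : Type*} [Fintype n] [DecidableEq n]
    [CommRing R] {Q W V : Matrix n n R} (hQW : Q * W = V) :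
    W.det • Q = V * W.adjugate := by
  rw [← hQW, Matrix.mul_assoc, Matrix.mul_adjugate, Matrix.mul_smul, Matrix.mul_one]

def denominatorIdeal {m n : Type*} (Q : Matrix m n ℚ) : Ideal ℤ where
  carrier := {d | ∀ i j, ∃ z : ℤ, (d : ℚ) * Q i j = z}
  zero_mem' i j := ⟨0, by simp⟩
  add_mem' {a b} ha hb i j := by
    obtain ⟨za, hza⟩ := ha i j
    obtain ⟨zb, hzb⟩ := hb i j
    exact ⟨za + zb, by push_cast; rw [add_mul, hza, hzb]⟩
  smul_mem' c a ha i j := by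
    obtain ⟨z, hz⟩ := ha i j
    exact ⟨c * z, by push_cast; rw [smul_eq_mul, Int.cast_mul, mul_assoc, hz]⟩

theorem mem_denominatorIdeal {m n : Type*} {Q : Matrix m n ℚ} {d : ℤ} :
    d ∈ denominatorIdeal Q ↔ ∀ i j, ∃ z : ℤ, (d : ℚ) * Q i j = z :=
  Iff.rfl

theorem det_mem_denominatorIdeal_of_mul_eq {n : Type*} [Fintype n] [DecidableEq n]
    {Q : Matrix n n ℚ} {W V : Matrix n n ℤ}
    (hQW : Q * W.map (Int.castRingHom ℚ) = V.map (Int.castRingHom ℚ)) :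
    W.det ∈ denominatorIdeal Q := by
  have h := Matrix.det_smul_eq_mul_adjugate_of_mul_eq hQW
  rw [← RingHom.mapMatrix_apply, ← RingHom.map_det, ← RingHom.map_adjugate,
    RingHom.mapMatrix_apply, ← Matrix.map_mul] at h
  intro i j
  exact ⟨(V * W.adjugate) i j, by simpa using congrFun (congrFun h i) j⟩

theorem IsLevel.natCast_dvd {n : ℕ} {Q : Matrix (Fin n) (Fin n) ℚ} {ℓ : ℕ} (hℓ : IsLevel Q ℓ)
    {d : ℤ} (hd : d ∈ denominatorIdeal Q) : (ℓ : ℤ) ∣ d := by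
  have hℓmem : (ℓ : ℤ) ∈ denominatorIdeal Q :=
    mem_denominatorIdeal.mpr (by simpa using hℓ.1.2)
  set g := Int.gcd ℓ d
  have hgmem : (g : ℤ) ∈ denominatorIdeal Q := by
    rw [Int.gcd_eq_gcd_ab]
    exact add_mem (Ideal.mul_mem_right _ _ hℓmem) (Ideal.mul_mem_right _ _ hd)
  have hg_dvd : g ∣ ℓ := by exact_mod_cast Int.gcd_dvd_left (ℓ : ℤ) d
  have hle : ℓ ≤ g :=
    hℓ.2 g (Nat.pos_of_dvd_of_pos hg_dvd hℓ.1.1) (by simpa using mem_denominatorIdeal.mp hgmem)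
  have hg : g = ℓ := le_antisymm (Nat.le_of_dvd hℓ.1.1 hg_dvd) hle
  exact hg ▸ Int.gcd_dvd_right (ℓ : ℤ) d

theorem level_dvd_walk_det_general
    {n : ℕ} (X Y : Matrix (Fin n) (Fin n) ℤ) (ζ η : Fin n → ℤ)
    (Q : Matrix (Fin n) (Fin n) ℚ)
    (hQ : Qᵀ * Q = 1)
    (hQX : Q * X.map (Int.cast : ℤ → ℚ) * Qᵀ = Y.map (Int.cast : ℤ → ℚ))
    (hQζ : Q *ᵥ (fun i => (ζ i : ℚ)) = fun i => (η i : ℚ))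
    (ℓ : ℕ) (hℓ : IsLevel Q ℓ) :
    (ℓ : ℤ) ∣ (walkMatrix X ζ).det := by
  have hW : Q * (walkMatrix X ζ).map (Int.castRingHom ℚ) =
      (walkMatrix Y η).map (Int.castRingHom ℚ) := by
    rw [walkMatrix_map, walkMatrix_map]
    exact mul_walkMatrix_of_semiconj (Matrix.mul_eq_mul_of_mul_mul_transpose_eq hQ hQX) hQζ
  exact hℓ.natCast_dvd (det_mem_denominatorIdeal_of_mul_eq hW)

/-- **Lemma.** The level `ℓ` of a rational orthogonal matrix `Q` with `Q X Qᵀ = Y`,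
`Q ζ = η`, divides `det(W_{X,ζ})` whenever the latter is nonzero. -/
theorem level_dvd_walk_det
    {n : ℕ} (X Y : Matrix (Fin n) (Fin n) ℤ) (ζ η : Fin n → ℤ)
    (hXsymm : X.IsSymm) (hYsymm : Y.IsSymm)
    (Q : Matrix (Fin n) (Fin n) ℚ)
    (hQ : Qᵀ * Q = 1)
    (hQX : Q * X.map (Int.cast : ℤ → ℚ) * Qᵀ = Y.map (Int.cast : ℤ → ℚ))
    (hQζ : Q *ᵥ (fun i => (ζ i : ℚ)) = fun i => (η i : ℚ))
    (hdet : (walkMatrix X ζ).det ≠ 0)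
    (ℓ : ℕ) (hℓ : IsLevel Q ℓ) :
    (ℓ : ℤ) ∣ (walkMatrix X ζ).det :=
  level_dvd_walk_det_general X Y ζ η Q hQ hQX hQζ ℓ hℓ
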